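/- Let R > 0 and let F ∈ L¹(ℝ₊; L¹(ℝ³)) be supported, for almost every time, in the ball B(0,R). Define a by the Duhamel formula a(t,x) = ∫₀ᵗ ∫_{B(0,R)} (4π(t−s))^{−3/2} exp(−|x−y|²/(4(t−s))) F(s,y) dy ds, i.e. a is the unique tempered-distribution solution of ∂ₜa − Δa = F with a(0) = 0. Then there exists a constant C_R > 0 such that for all t > 0 and all x with |x| > 2R, one has |a(t,x)| ≤ C_R ‖F‖_{L¹(ℝ₊;L¹(ℝ³))} |x|^{−3}. -/

import Mathlib

open MeasureTheory Set Function Real Filter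
open scoped ENNReal FourierTransform SchwartzMap

noncomputable section

/-- Three-dimensional Euclidean space. -/
abbrev R3 := EuclideanSpace ℝ (Fin 3)

/-- Partial derivative in the `i`-th coordinate direction. -/
def pdx (i : Fin 3) (f : R3 → ℝ) (x : R3) : ℝ := fderiv ℝ f x (EuclideanSpace.single i 1)

/-- Laplacian of a function on `R3`. -/
def lapx (f : R3 → ℝ) (x : R3) : ℝ := ∑ i, pdx i (pdx i f) x

/-- Time derivative of a time-dependent function. -/
def tder (φ : ℝ → R3 → ℝ) (t : ℝ) (x : R3) : ℝ := deriv (fun s => φ s x) t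

/-- A smooth, compactly supported test function on time-space. -/
def IsTest (φ : ℝ → R3 → ℝ) : Prop :=
  ContDiff ℝ (⊤ : ℕ∞) (uncurry φ) ∧ HasCompactSupport (uncurry φ)

/-- A smooth, compactly supported test function on space. -/
def IsTestX (φ : R3 → ℝ) : Prop := ContDiff ℝ (⊤ : ℕ∞) φ ∧ HasCompactSupport φ

/-- The mixed space-time Lebesgue norm `L^p_t(s; L^q_x)`. -/
def LLnorm (s : Set ℝ) (p q : ℝ≥0∞) (f : ℝ → R3 → ℝ) : ℝ≥0∞ :=
  eLpNorm (fun t => (eLpNorm (f t) q volume).toReal) p (volume.restrict s)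

/-- Membership in the mixed space-time Lebesgue space `L^p(s; L^q(ℝ³))`. -/
def MemLL (s : Set ℝ) (p q : ℝ≥0∞) (f : ℝ → R3 → ℝ) : Prop :=
  AEStronglyMeasurable (uncurry f) ((volume.restrict s).prod volume) ∧
  LLnorm s p q f < ⊤

/-- `g` is the weak (distributional) `i`-th spatial partial derivative of `f` on `(0,∞) × ℝ³`. -/
def HasWeakPdT (f : ℝ → R3 → ℝ) (i : Fin 3) (g : ℝ → R3 → ℝ) : Prop :=
  ∀ φ, IsTest φ →
    ∫ t in Ioi (0:ℝ), ∫ x, f t x * pdx i (φ t) x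
      = - ∫ t in Ioi (0:ℝ), ∫ x, g t x * φ t x

/-- Membership in `L²(ℝ₊; H¹(ℝ³))`, with `g` the weak spatial gradient. -/
def MemL2H1 (f : ℝ → R3 → ℝ) (g : Fin 3 → ℝ → R3 → ℝ) : Prop :=
  MemLL (Ioi 0) 2 2 f ∧ ∀ i, HasWeakPdT f i (g i) ∧ MemLL (Ioi 0) 2 2 (g i)

/-- The vector field `v` is divergence free in the sense of distributions. -/
def DivFree (v : ℝ → R3 → R3) : Prop :=
  ∀ φ, IsTest φ → ∫ t in Ioi (0:ℝ), ∫ x, ∑ i, v t x i * pdx i (φ t) x = 0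

/-- Weak (distributional) solution of `∂ₜ a + ∇·(a v) − ν Δ a = F`, `a(0) = a₀`,
tested against all smooth compactly supported test functions on `[0,∞) × ℝ³`. -/
def WeakSol (ν : ℝ) (v : ℝ → R3 → R3) (F : ℝ → R3 → ℝ) (a₀ : R3 → ℝ)
    (a : ℝ → R3 → ℝ) : Prop :=
  ∀ φ, IsTest φ →
    (∫ t in Ioi (0:ℝ), ∫ x, (a t x * tder φ t x
        + a t x * ∑ i, v t x i * pdx i (φ t) x
        + ν * (a t x * lapx (φ t) x) + F t x * φ t x))
      + ∫ x, a₀ x * φ 0 x = 0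

/-- The generalized power `a^α := a|a|^{α−1}` (with `0^α = 0`). -/
def gpow (x α : ℝ) : ℝ := x * |x| ^ (α - 1)

end

lemma exp_neg_le' (u : ℝ) (hu : 0 < u) : Real.exp (-u) ≤ 4 / u ^ 2 := by
  have h1 : (u / 2) ^ 2 ≤ Real.exp u := by
    have h2 : u / 2 + 1 ≤ Real.exp (u / 2) := Real.add_one_le_exp _
    have h4 : (u / 2 + 1) ^ 2 ≤ (Real.exp (u / 2)) ^ 2 :=
      pow_le_pow_left₀ (by positivity) h2 2
    calc (u/2)^2 ≤ (u/2+1)^2 := by nlinarith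
      _ ≤ (Real.exp (u/2))^2 := h4
      _ = Real.exp u := by rw [sq, ← Real.exp_add]; ring_nf
  rw [Real.exp_neg]
  have h5 : 0 < (u/2)^2 := by positivity
  have h6 : (Real.exp u)⁻¹ ≤ ((u/2)^2)⁻¹ := inv_anti₀ h5 h1
  calc (Real.exp u)⁻¹ ≤ ((u/2)^2)⁻¹ := h6
    _ = 4 / u^2 := by field_simp; ring

lemma ker_le (τ r : ℝ) (hτ : 0 < τ) (hr : 0 < r) :
    (4 * π * τ) ^ (-(3:ℝ) / 2) * Real.exp (-r ^ 2 / (4 * τ)) ≤ 64 * (r ^ 3)⁻¹ := by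
  have hπ : (1:ℝ) ≤ 4 * π := by nlinarith [Real.pi_gt_three]
  have h1 : (4 * π * τ) ^ (-(3:ℝ)/2) ≤ τ ^ (-(3:ℝ)/2) :=
    Real.rpow_le_rpow_of_nonpos hτ (by nlinarith) (by norm_num)
  have hτe : (0:ℝ) ≤ τ ^ (-(3:ℝ)/2) := Real.rpow_nonneg hτ.le _
  rcases le_or_gt (r ^ 2) τ with h | h
  · have h2 : τ ^ (-(3:ℝ)/2) ≤ (r^2 : ℝ) ^ (-(3:ℝ)/2) :=
      Real.rpow_le_rpow_of_nonpos (by positivity) h (by norm_num)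
    have h3 : Real.exp (-r^2/(4*τ)) ≤ 1 := by
      rw [Real.exp_le_one_iff]
      have : (0:ℝ) ≤ r^2/(4*τ) := by positivity
      rw [neg_div]; linarith
    have h4 : (r^2 : ℝ) ^ (-(3:ℝ)/2) = (r^3)⁻¹ := by
      rw [← Real.rpow_natCast r 2, ← Real.rpow_mul hr.le]
      norm_num
    calc (4 * π * τ) ^ (-(3:ℝ)/2) * Real.exp (-r^2/(4*τ))
        ≤ τ ^ (-(3:ℝ)/2) * 1 := mul_le_mul h1 h3 (Real.exp_pos _).le hτe
      _ ≤ (r^2:ℝ) ^ (-(3:ℝ)/2) * 1 := by nlinarith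
      _ = (r^3)⁻¹ := by rw [h4, mul_one]
      _ ≤ 64 * (r^3)⁻¹ := by
          have : (0:ℝ) < (r^3)⁻¹ := by positivity
          nlinarith
  · have hu : 0 < r^2/(4*τ) := by positivity
    have h4 : Real.exp (-r^2/(4*τ)) ≤ 64 * τ^2 / r^4 := by
      have := exp_neg_le' (r^2/(4*τ)) hu
      rw [neg_div]
      calc Real.exp (-(r^2/(4*τ))) ≤ 4 / (r^2/(4*τ))^2 := this
        _ = 64 * τ^2 / r^4 := by field_simp; ring
    have h5 : τ^(-(3:ℝ)/2) * (64 * τ^2 / r^4) = 64 * τ^((1:ℝ)/2) / r^4 := by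
      rw [show (τ:ℝ)^2 = τ^((2:ℕ):ℝ) by rw [Real.rpow_natCast]]
      rw [mul_div_assoc, mul_div_assoc, ← mul_assoc, mul_comm (τ^(-(3:ℝ)/2)) 64,
        mul_assoc, div_eq_mul_inv (τ^((2:ℕ):ℝ)), ← mul_assoc (τ^(-(3:ℝ)/2)),
        ← Real.rpow_add hτ]
      norm_num [div_eq_mul_inv]
    have h6 : τ^((1:ℝ)/2) ≤ r := by
      have h7 : τ^((1:ℝ)/2) ≤ (r^2:ℝ)^((1:ℝ)/2) := Real.rpow_le_rpow hτ.le h.le (by norm_num)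
      have h8 : (r^2:ℝ)^((1:ℝ)/2) = r := by
        rw [← Real.rpow_natCast r 2, ← Real.rpow_mul hr.le]
        norm_num
      linarith [h8 ▸ h7]
    have h9 : 64 * τ^((1:ℝ)/2) / r^4 ≤ 64 * (r^3)⁻¹ := by
      rw [div_le_iff₀ (by positivity)]
      have : (64:ℝ) * (r^3)⁻¹ * r^4 = 64 * r := by field_simp
      rw [this]; nlinarith
    calc (4 * π * τ) ^ (-(3:ℝ)/2) * Real.exp (-r^2/(4*τ))
        ≤ τ ^ (-(3:ℝ)/2) * (64 * τ^2 / r^4) :=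
          mul_le_mul h1 h4 (Real.exp_pos _).le hτe
      _ = 64 * τ^((1:ℝ)/2) / r^4 := h5
      _ ≤ 64 * (r^3)⁻¹ := h9

lemma ker_le2 (τ a b : ℝ) (hτ : 0 < τ) (ha : 0 < a) (hab : a / 2 ≤ b) :
    (4 * π * τ) ^ (-(3:ℝ) / 2) * Real.exp (-b ^ 2 / (4 * τ)) ≤ 512 * a ^ (-(3:ℝ)) := by
  have hb : 0 < b := lt_of_lt_of_le (by linarith) hab
  have h1 := ker_le τ b hτ hb
  have h2 : (b^3)⁻¹ ≤ ((a/2)^3)⁻¹ := by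
    apply inv_anti₀ (by positivity)
    exact pow_le_pow_left₀ (by positivity) hab 3
  have h3 : a ^ (-(3:ℝ)) = (a^3)⁻¹ := by
    rw [Real.rpow_neg ha.le, show ((3:ℝ)) = ((3:ℕ):ℝ) by norm_num, Real.rpow_natCast]
  rw [h3]
  have h4 : ((a/2)^3)⁻¹ = 8 * (a^3)⁻¹ := by field_simp; ring
  nlinarith [h4 ▸ h2]

/-- Spatial decay for the heat equation with compactly supported
integrable source: the Duhamel solution of `∂ₜa − Δa = F`, `a(0) = 0`, with `F`
supported in `B(0,R)`, decays like `|x|^{-3}` for `|x| > 2R`. -/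
theorem heat_decay
    (R : ℝ) (hR : 0 < R)
    (F : ℝ → R3 → ℝ)
    (hF : MemLL (Ioi 0) 1 1 F)
    (hsupp : ∀ᵐ s ∂(volume.restrict (Ioi 0)),
      ∀ x : R3, x ∉ Metric.ball (0:R3) R → F s x = 0) :
    ∃ C > (0:ℝ), ∀ t > (0:ℝ), ∀ x : R3, 2 * R < ‖x‖ →
      |∫ s in Ioo (0:ℝ) t, ∫ y in Metric.ball (0:R3) R,
          (4 * π * (t - s)) ^ (-(3:ℝ) / 2) * Real.exp (-‖x - y‖ ^ 2 / (4 * (t - s))) * F s y|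
        ≤ C * (∫ s in Ioi (0:ℝ), ∫ y, |F s y|) * ‖x‖ ^ (-(3:ℝ)) := by
  obtain ⟨hFm, hFn⟩ := hF
  set G : ℝ → ℝ := fun s => ∫ y, |F s y| with hGdef
  have hGm : AEStronglyMeasurable G (volume.restrict (Ioi 0)) := by
    have := hFm.norm.integral_prod_right'
    simpa [Function.uncurry, Real.norm_eq_abs, hGdef] using this
  have hGnn : ∀ s, 0 ≤ G s := fun s => integral_nonneg fun y => abs_nonneg _
  have hslice : ∀ᵐ s ∂(volume.restrict (Ioi 0)), AEStronglyMeasurable (F s) volume := by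
    have := hFm.prodMk_left
    simpa [Function.uncurry] using this
  have hGle : ∀ᵐ s ∂(volume.restrict (Ioi 0)),
      G s ≤ (eLpNorm (F s) 1 volume).toReal := by
    filter_upwards [hslice] with s hs
    by_cases hi : Integrable (F s) volume
    · have h1 : eLpNorm (F s) 1 volume = ENNReal.ofReal (∫ y, ‖F s y‖) := by
        rw [eLpNorm_one_eq_lintegral_enorm, ← ofReal_integral_norm_eq_lintegral_enorm hi]
      rw [h1, ENNReal.toReal_ofReal (integral_nonneg fun y => norm_nonneg _)]
      simp [hGdef, Real.norm_eq_abs]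
    · have h0 : ¬ Integrable (fun y => |F s y|) volume := by
        intro h
        exact hi ((integrable_norm_iff hs).1 (by simpa [Real.norm_eq_abs] using h))
      simp only [hGdef]
      rw [integral_undef h0]
      exact ENNReal.toReal_nonneg
  have hGint : IntegrableOn G (Ioi 0) volume := by
    refine ⟨hGm, ?_⟩
    have hfin : ∫⁻ s in Ioi (0:ℝ), ‖(eLpNorm (F s) 1 volume).toReal‖₊ < ⊤ := by
      have := hFn
      rwa [LLnorm, eLpNorm_one_eq_lintegral_enorm] at this
    refine lt_of_le_of_lt ?_ hfin
    apply lintegral_mono_ae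
    filter_upwards [hGle] with s hs
    have h1 : ‖G s‖ ≤ ‖(eLpNorm (F s) 1 volume).toReal‖ := by
      rw [Real.norm_eq_abs, Real.norm_eq_abs, abs_of_nonneg (hGnn s),
        abs_of_nonneg ENNReal.toReal_nonneg]
      exact hs
    exact_mod_cast ENNReal.coe_le_coe.2 (by rwa [← NNReal.coe_le_coe, coe_nnnorm, coe_nnnorm])
  refine ⟨512, by norm_num, ?_⟩
  intro t ht x hx
  have hxpos : (0:ℝ) < ‖x‖ := by linarith
  set M : ℝ := 512 * ‖x‖ ^ (-(3:ℝ)) with hMdef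
  have hMpos : 0 < M := by
    have : (0:ℝ) < ‖x‖ ^ (-(3:ℝ)) := Real.rpow_pos_of_pos hxpos _
    positivity
  have hsub : Ioo (0:ℝ) t ⊆ Ioi 0 := Ioo_subset_Ioi_self
  have key : ∀ᵐ s ∂(volume.restrict (Ioo (0:ℝ) t)),
      |∫ y in Metric.ball (0:R3) R,
          (4 * π * (t - s)) ^ (-(3:ℝ) / 2) * Real.exp (-‖x - y‖ ^ 2 / (4 * (t - s))) * F s y|
        ≤ M * G s := by
    have h1 := ae_restrict_of_ae_restrict_of_subset hsub hslice
    have h2 := ae_restrict_of_ae_restrict_of_subset hsub hsupp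
    filter_upwards [h1, h2, ae_restrict_mem measurableSet_Ioo] with s hs hz hmem
    set τ := t - s with hτdef
    have hτ : 0 < τ := by simp only [hτdef]; exact sub_pos.2 hmem.2
    set K : R3 → ℝ := fun y => (4 * π * τ) ^ (-(3:ℝ) / 2) * Real.exp (-‖x - y‖ ^ 2 / (4 * τ))
      with hKdef
    have hK0 : ∀ y, 0 ≤ K y := fun y => by
      have := Real.exp_pos (-‖x - y‖ ^ 2 / (4 * τ))
      have h4 : (0:ℝ) < 4 * π * τ := by positivity
      have := Real.rpow_pos_of_pos h4 (-(3:ℝ)/2)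
      positivity
    have hKc : Continuous K := by
      apply Continuous.mul continuous_const
      apply Real.continuous_exp.comp
      fun_prop
    have hker : ∀ y ∈ Metric.ball (0:R3) R, K y ≤ M := by
      intro y hy
      have hyR : ‖y‖ < R := by simpa [Metric.mem_ball] using hy
      have hlow : ‖x‖ / 2 ≤ ‖x - y‖ := by
        have := norm_sub_norm_le x y
        linarith
      exact ker_le2 τ ‖x‖ ‖x - y‖ hτ hxpos hlow
    set c : ℝ := (4 * π * τ) ^ (-(3:ℝ) / 2) * Real.exp (-(‖x‖ + R) ^ 2 / (4 * τ)) with hcdef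
    have hc : 0 < c := by
      have h4 : (0:ℝ) < 4 * π * τ := by positivity
      have := Real.rpow_pos_of_pos h4 (-(3:ℝ)/2)
      have := Real.exp_pos (-(‖x‖ + R) ^ 2 / (4 * τ))
      positivity
    have hlowK : ∀ y ∈ Metric.ball (0:R3) R, c ≤ K y := by
      intro y hy
      have hyR : ‖y‖ < R := by simpa [Metric.mem_ball] using hy
      have h1 : ‖x - y‖ ≤ ‖x‖ + R := by
        have := norm_sub_le x y
        linarith
      have h2 : ‖x - y‖ ^ 2 ≤ (‖x‖ + R) ^ 2 := by nlinarith [norm_nonneg (x - y)]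
      have h3 : -(‖x‖ + R) ^ 2 / (4 * τ) ≤ -‖x - y‖ ^ 2 / (4 * τ) := by
        exact div_le_div_of_nonneg_right (neg_le_neg h2) (by positivity)
      simp only [hKdef, hcdef]
      exact mul_le_mul_of_nonneg_left (Real.exp_le_exp.2 h3) (by positivity)
    by_cases hi : Integrable (F s) volume
    · have hIball : IntegrableOn (fun y => |F s y|) (Metric.ball (0:R3) R) volume :=
        hi.abs.integrableOn
      have habs : ∀ᵐ y ∂(volume.restrict (Metric.ball (0:R3) R)),
          ‖K y * F s y‖ ≤ M * |F s y| := by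
        filter_upwards [ae_restrict_mem measurableSet_ball] with y hy
        rw [Real.norm_eq_abs, abs_mul, abs_of_nonneg (hK0 y)]
        exact mul_le_mul_of_nonneg_right (hker y hy) (abs_nonneg _)
      have hdom : IntegrableOn (fun y => M * |F s y|) (Metric.ball (0:R3) R) volume :=
        hIball.const_mul M
      have hKm : AEStronglyMeasurable (fun y => K y * F s y)
          (volume.restrict (Metric.ball (0:R3) R)) :=
        (hKc.aestronglyMeasurable.restrict).mul hs.restrict
      have hint : IntegrableOn (fun y => K y * F s y) (Metric.ball (0:R3) R) volume :=
        Integrable.mono' hdom hKm habs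
      have hfull : ∫ y in Metric.ball (0:R3) R, |F s y| = G s := by
        simp only [hGdef]
        exact setIntegral_eq_integral_of_forall_compl_eq_zero
          (fun y hy => by rw [hz y hy, abs_zero])
      calc |∫ y in Metric.ball (0:R3) R, K y * F s y|
          ≤ ∫ y in Metric.ball (0:R3) R, |K y * F s y| := by
            have := norm_integral_le_integral_norm
              (μ := volume.restrict (Metric.ball (0:R3) R)) (fun y => K y * F s y)
            simpa only [Real.norm_eq_abs] using this
        _ ≤ ∫ y in Metric.ball (0:R3) R, M * |F s y| :=
            integral_mono_of_nonneg (.of_forall fun y => abs_nonneg _) hdom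
              (by
              filter_upwards [habs] with y hy
              rw [← Real.norm_eq_abs]
              exact hy)
        _ = M * ∫ y in Metric.ball (0:R3) R, |F s y| := integral_const_mul M _
        _ = M * G s := by rw [hfull]
    · have hG0 : G s = 0 := by
        simp only [hGdef]
        apply integral_undef
        intro h
        exact hi ((integrable_norm_iff hs).1 (by simpa [Real.norm_eq_abs] using h))
      have hI0 : ¬ IntegrableOn (fun y => K y * F s y) (Metric.ball (0:R3) R) volume := by
        intro h
        apply hi
        have hFb : IntegrableOn (F s) (Metric.ball (0:R3) R) volume := by
          apply Integrable.mono' (h.norm.const_mul c⁻¹) hs.restrict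
          filter_upwards [ae_restrict_mem measurableSet_ball] with y hy
          rw [Real.norm_eq_abs, Real.norm_eq_abs, abs_mul, abs_of_nonneg (hK0 y)]
          calc |F s y| = c⁻¹ * (c * |F s y|) := by field_simp
            _ ≤ c⁻¹ * (K y * |F s y|) := by
                apply mul_le_mul_of_nonneg_left ?_ (inv_nonneg.2 hc.le)
                exact mul_le_mul_of_nonneg_right (hlowK y hy) (abs_nonneg _)
        rwa [← integrableOn_iff_integrable_of_support_subset (s := Metric.ball (0:R3) R)]
        intro y hy
        by_contra hyb
        exact hy (hz y hyb)
      rw [integral_undef hI0, hG0, mul_zero, abs_zero]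
  set g : ℝ → ℝ := fun s => ∫ y in Metric.ball (0:R3) R,
      (4 * π * (t - s)) ^ (-(3:ℝ) / 2) * Real.exp (-‖x - y‖ ^ 2 / (4 * (t - s))) * F s y
    with hgdef
  have hGint' : IntegrableOn (fun s => M * G s) (Ioo (0:ℝ) t) volume :=
    (hGint.mono_set hsub).const_mul M
  have step1 : |∫ s in Ioo (0:ℝ) t, g s| ≤ ∫ s in Ioo (0:ℝ) t, |g s| := by
    simpa [Real.norm_eq_abs] using
      norm_integral_le_integral_norm (μ := volume.restrict (Ioo (0:ℝ) t)) g
  have step2 : ∫ s in Ioo (0:ℝ) t, |g s| ≤ ∫ s in Ioo (0:ℝ) t, M * G s :=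
    integral_mono_of_nonneg (.of_forall fun s => abs_nonneg _) hGint' key
  have step3 : ∫ s in Ioo (0:ℝ) t, M * G s = M * ∫ s in Ioo (0:ℝ) t, G s :=
    integral_const_mul M _
  have step4 : ∫ s in Ioo (0:ℝ) t, G s ≤ ∫ s in Ioi (0:ℝ), G s :=
    setIntegral_mono_set hGint (Eventually.of_forall hGnn) (HasSubset.Subset.eventuallyLE hsub)
  have final : |∫ s in Ioo (0:ℝ) t, g s| ≤ M * ∫ s in Ioi (0:ℝ), G s := by
    calc |∫ s in Ioo (0:ℝ) t, g s| ≤ ∫ s in Ioo (0:ℝ) t, |g s| := step1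
      _ ≤ ∫ s in Ioo (0:ℝ) t, M * G s := step2
      _ = M * ∫ s in Ioo (0:ℝ) t, G s := step3
      _ ≤ M * ∫ s in Ioi (0:ℝ), G s := mul_le_mul_of_nonneg_left step4 hMpos.le
  calc |∫ s in Ioo (0:ℝ) t, g s| ≤ M * ∫ s in Ioi (0:ℝ), G s := final
    _ = 512 * (∫ s in Ioi (0:ℝ), ∫ y, |F s y|) * ‖x‖ ^ (-(3:ℝ)) := by
        simp only [hMdef, hGdef]; ring
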